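/- (One-step quadratic contraction for exact DPO-Mix-P.) Let θ ∈ ℝ^𝒴 and suppose there is s > 0 with σ'(β(θ_a − θ_{a'})) ≥ s for all a, a' ∈ 𝒴. Let θ' be obtained by one exact DPO-Mix-P step with learning rate η = 1/(β²A): θ'_a = θ_a + (1/(βA)) Σ_{a''∈𝒴} Δ(a,a'';θ)/σ'(β(θ_a − θ_{a''})) for every a. Then for all a, a' ∈ 𝒴, |δ(a,a';θ')| ≤ (1/(6√3 · s)) · max_{b,b'∈𝒴} δ(b,b';θ)². -/

import Mathlib

/-- The sigmoid function. -/
noncomputable def sig (x : ℝ) : ℝ := 1 / (1 + Real.exp (-x))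

/-- The derivative of the sigmoid function. -/
noncomputable def sig' (x : ℝ) : ℝ := sig x * (1 - sig x)

/-!
Write `z = β (θ_a - θ_b)`, so that `r a - r b = z + δ(a, b; θ)`. Since `|σ''| ≤ 1/(6√3)`, Taylor's
theorem gives `Δ(a, b; θ) / σ'(z) = δ(a, b; θ) + E(a, b)` with `|E(a, b)| ≤ δ(a, b; θ)² / (12√3 s)`.
The terms `δ(a, b; θ) - δ(a', b; θ)` all equal `δ(a, a'; θ)`, so the step with `η = 1/(β²A)`
cancels the linear part exactly: `δ(a, a'; θ') = -(1/A) ∑_b (E(a, b) - E(a', b))`, which is at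
most twice the bound on `E`.
-/

open MeasureTheory
open scoped NNReal
open scoped Interval

theorem LipschitzWith.norm_sub_sub_smul_le_of_hasDerivAt {E : Type*} [NormedAddCommGroup E]
    [NormedSpace ℝ E] [CompleteSpace E] {f f' : ℝ → E} {K : ℝ≥0}
    (hf : ∀ x, HasDerivAt f (f' x) x) (hK : LipschitzWith K f') (x y : ℝ) :
    ‖f y - f x - (y - x) • f' x‖ ≤ K / 2 * (y - x) ^ 2 := by
  have hF : ∀ t, HasDerivAt (fun t => f t - t • f' x) (f' t - f' x) t := fun t => by
    simpa using (hf t).fun_sub ((hasDerivAt_id' t).smul_const (f' x))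
  have hftc : ∫ t in x..y, (f' t - f' x) = f y - f x - (y - x) • f' x := by
    rw [intervalIntegral.integral_eq_sub_of_hasDerivAt (fun t _ => hF t)
      ((hK.continuous.sub continuous_const).intervalIntegrable x y), sub_smul]
    abel
  rw [← hftc, intervalIntegral.norm_intervalIntegral_eq]
  calc ‖∫ t in Ι x y, (f' t - f' x)‖ ≤ ∫ t in Ι x y, K * |t - x| ^ 1 :=
        norm_integral_le_of_norm_le
          (Continuous.integrableOn_uIoc (by fun_prop))
          (ae_of_all _ fun t => by simpa [dist_eq_norm] using hK.dist_le_mul t x)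
    _ = K / 2 * (y - x) ^ 2 := by
      rw [integral_const_mul, integral_pow_abs_sub_uIoc, sq_abs]; ring

theorem sig_eq_sigmoid : sig = Real.sigmoid := funext fun _ => one_div _

theorem hasDerivAt_sig (x : ℝ) : HasDerivAt sig (sig' x) x := by
  have h := Real.hasDerivAt_sigmoid x
  rwa [← sig_eq_sigmoid] at h

theorem hasDerivAt_sig' (x : ℝ) : HasDerivAt sig' (sig' x * (1 - 2 * sig x)) x :=
  ((hasDerivAt_sig x).mul ((hasDerivAt_sig x).const_sub 1)).congr_deriv
    (by simp only [sig']; ring)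

theorem abs_mul_one_sub_mul_one_sub_two_mul_le {u : ℝ} (h0 : 0 ≤ u) (h1 : u ≤ 1) :
    |u * (1 - u) * (1 - 2 * u)| ≤ 1 / (6 * √3) := by
  refine abs_le_of_sq_le_sq ?_ (by positivity)
  have h108 : (1 / (6 * √3)) ^ 2 = 1 / 108 := by
    rw [div_pow, mul_pow, Real.sq_sqrt zero_le_three]; norm_num
  rw [h108]
  -- with `v = (1 - 2u)²`, the square is `v (1 - v)² / 16`, maximal at `v = 1/3`
  nlinarith [sq_nonneg ((1 - 2 * u) ^ 2 - 1 / 3), mul_nonneg h0 (sub_nonneg.2 h1),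
    mul_nonneg (mul_nonneg h0 (sub_nonneg.2 h1)) (sq_nonneg ((1 - 2 * u) ^ 2 - 1 / 3))]

theorem lipschitzWith_sig' : LipschitzWith (1 / (6 * √3)).toNNReal sig' := by
  refine lipschitzWith_of_nnnorm_deriv_le (fun x => (hasDerivAt_sig' x).differentiableAt)
    fun x => ?_
  rw [← NNReal.coe_le_coe, coe_nnnorm, Real.coe_toNNReal _ (by positivity),
    (hasDerivAt_sig' x).deriv, Real.norm_eq_abs]
  have h0 := (Real.sigmoid_pos x).le
  have h1 := (Real.sigmoid_lt_one x).le
  rw [← sig_eq_sigmoid] at h0 h1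
  exact abs_mul_one_sub_mul_one_sub_two_mul_le h0 h1

theorem abs_sig_sub_sig_sub_sig'_mul_le (x y : ℝ) :
    |sig y - sig x - sig' x * (y - x)| ≤ 1 / (12 * √3) * (y - x) ^ 2 := by
  have := lipschitzWith_sig'.norm_sub_sub_smul_le_of_hasDerivAt hasDerivAt_sig x y
  rw [Real.norm_eq_abs, smul_eq_mul, mul_comm (y - x)] at this
  convert this using 2
  rw [Real.coe_toNNReal _ (by positivity)]; ring

theorem abs_sig_sub_div_sig'_sub_le {s x : ℝ} (hs : 0 < s) (hx : s ≤ sig' x) (y : ℝ) :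
    |(sig y - sig x) / sig' x - (y - x)| ≤ 1 / (12 * √3) * (y - x) ^ 2 / s := by
  have hx₀ : 0 < sig' x := hs.trans_le hx
  have hrw : (sig y - sig x) / sig' x - (y - x) = (sig y - sig x - sig' x * (y - x)) / sig' x := by
    field_simp
  rw [hrw, abs_div, abs_of_pos hx₀]
  exact div_le_div₀ (by positivity) (abs_sig_sub_sig_sub_sig'_mul_le x y) hs hx

section DPOMixP

variable {Y : Type*} [Fintype Y]

/-- The paper's `δ(a, a'; θ)`. -/
def gapResidual (r : Y → ℝ) (β : ℝ) (θ : Y → ℝ) (a a' : Y) : ℝ :=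
  r a - r a' - β * (θ a - θ a')

theorem sum_gapResidual_sub_gapResidual (r : Y → ℝ) (β : ℝ) (θ : Y → ℝ) (a a' : Y) :
    ∑ b, (gapResidual r β θ a b - gapResidual r β θ a' b) =
      Fintype.card Y * gapResidual r β θ a a' := by
  simp only [gapResidual]
  rw [← nsmul_eq_mul, ← Finset.card_univ, ← Finset.sum_const]
  exact Finset.sum_congr rfl fun b _ => by ring

theorem gapResidual_of_update {r : Y → ℝ} {β : ℝ} (hβ : β ≠ 0) {θ θ' : Y → ℝ} (F : Y → Y → ℝ)
    (hθ' : ∀ a, θ' a = θ a + 1 / (β * Fintype.card Y) * ∑ b, F a b) (a a' : Y) :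
    gapResidual r β θ' a a' = -(1 / Fintype.card Y *
      ∑ b, ((F a b - gapResidual r β θ a b) - (F a' b - gapResidual r β θ a' b))) := by
  have hY : (Fintype.card Y : ℝ) ≠ 0 := Nat.cast_ne_zero.2 (Fintype.card_pos_iff.2 ⟨a⟩).ne'
  have hsum := sum_gapResidual_sub_gapResidual r β θ a a'
  have hsplit : ∑ b, ((F a b - gapResidual r β θ a b) - (F a' b - gapResidual r β θ a' b)) =
      ∑ b, F a b - ∑ b, F a' b - ∑ b, (gapResidual r β θ a b - gapResidual r β θ a' b) := by
    simp only [← Finset.sum_sub_distrib]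
    exact Finset.sum_congr rfl fun b _ => by ring
  rw [hsplit, hsum]
  simp only [gapResidual, hθ']
  field_simp
  ring

theorem abs_inv_card_mul_sum_sub_le [Nonempty Y] {u v : Y → ℝ} {C : ℝ} (hu : ∀ b, |u b| ≤ C)
    (hv : ∀ b, |v b| ≤ C) : |1 / Fintype.card Y * ∑ b, (u b - v b)| ≤ 2 * C := by
  have hY : (0 : ℝ) < Fintype.card Y := Nat.cast_pos.2 Fintype.card_pos
  rw [abs_mul, abs_of_pos (by positivity), one_div_mul_eq_div, div_le_iff₀ hY]
  calc |∑ b, (u b - v b)| ≤ ∑ b, (|u b| + |v b|) :=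
        (Finset.abs_sum_le_sum_abs _ _).trans (Finset.sum_le_sum fun b _ => abs_sub _ _)
    _ ≤ ∑ _b : Y, 2 * C := Finset.sum_le_sum fun b _ => by linarith [hu b, hv b]
    _ = 2 * C * Fintype.card Y := by simp [mul_comm]

end DPOMixP

theorem dpo_mix_p_one_step_contraction_general
    {Y : Type*} [Fintype Y]
    (A : ℕ) (hA : A = Fintype.card Y)
    (r : Y → ℝ)
    (β : ℝ) (hβ : 0 < β)
    (s : ℝ) (hs : 0 < s)
    (θ θ' : Y → ℝ)
    (hσ' : ∀ a a' : Y, s ≤ sig' (β * (θ a - θ a')))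
    (hupd : ∀ a, θ' a = θ a +
      (1 / (β * A)) * ∑ a'' : Y,
        (sig (r a - r a'') - sig (β * (θ a - θ a''))) /
          sig' (β * (θ a - θ a''))) :
    ∀ a a' : Y,
      |r a - r a' - β * (θ' a - θ' a')| ≤
        (1 / (6 * Real.sqrt 3 * s)) *
          ⨆ p : Y × Y, (r p.1 - r p.2 - β * (θ p.1 - θ p.2)) ^ 2 := by
  intro a a'
  subst hA
  have : Nonempty Y := ⟨a⟩
  set D := ⨆ p : Y × Y, (r p.1 - r p.2 - β * (θ p.1 - θ p.2)) ^ 2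
  have hD : ∀ x y, gapResidual r β θ x y ^ 2 ≤ D := fun x y =>
    le_ciSup (Finite.bddAbove_range fun p : Y × Y => gapResidual r β θ p.1 p.2 ^ 2) (x, y)
  have hstep : ∀ x y, |(sig (r x - r y) - sig (β * (θ x - θ y))) / sig' (β * (θ x - θ y)) -
      gapResidual r β θ x y| ≤ 1 / (12 * √3) * D / s := fun x y =>
    (abs_sig_sub_div_sig'_sub_le hs (hσ' x y) _).trans <| by gcongr; exact hD x y
  change |gapResidual r β θ' a a'| ≤ _
  rw [gapResidual_of_update hβ.ne'
    (fun x y => (sig (r x - r y) - sig (β * (θ x - θ y))) / sig' (β * (θ x - θ y))) hupd, abs_neg]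
  refine (abs_inv_card_mul_sum_sub_le (hstep a) (hstep a')).trans_eq ?_
  field_simp
  ring

/-- **One-step quadratic contraction for exact DPO-Mix-P.**
If `σ'(β(θ_a - θ_{a'})) ≥ s > 0` for all pairs, then one exact DPO-Mix-P
step with learning rate `η = 1/(β²A)` contracts the reward-gap errors
quadratically, with factor `1/(6√3·s)`. -/
theorem dpo_mix_p_one_step_contraction
    {Y : Type*} [Fintype Y] [Nonempty Y]
    (A : ℕ) (hA : A = Fintype.card Y)
    (r : Y → ℝ) (hr : ∀ a, 0 ≤ r a ∧ r a ≤ 1)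
    (β : ℝ) (hβ : 0 < β)
    (s : ℝ) (hs : 0 < s)
    (θ θ' : Y → ℝ)
    (hσ' : ∀ a a' : Y, s ≤ sig' (β * (θ a - θ a')))
    (hupd : ∀ a, θ' a = θ a +
      (1 / (β * A)) * ∑ a'' : Y,
        (sig (r a - r a'') - sig (β * (θ a - θ a''))) /
          sig' (β * (θ a - θ a''))) :
    ∀ a a' : Y,
      |r a - r a' - β * (θ' a - θ' a')| ≤
        (1 / (6 * Real.sqrt 3 * s)) *
          ⨆ p : Y × Y, (r p.1 - r p.2 - β * (θ p.1 - θ p.2)) ^ 2 :=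
  dpo_mix_p_one_step_contraction_general A hA r β hβ s hs θ θ' hσ' hupd
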